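/- Let C > 0 and ρ(z,w) = |w + exp(i·log(|z|²))|² + C·(log(|z|²))⁴ − 1 on (ℂ∖{0}) × ℂ (real logarithm). For θ ∈ ℝ set p(θ) = (e^{iθ}, 0) and ξ(θ) = (e^{iθ}, 0) ∈ ℂ². Then for every θ ∈ ℝ: ρ(p(θ)) = 0 (so the circle M = {(z,0) : |z| = 1} lies in {ρ = 0} = ∂Ω); ∂ρ(p(θ))(ξ(θ)) = 0 (so ξ(θ) spans the complex tangent space at p(θ), and in particular the tangent vector i·ξ(θ) of the curve θ ↦ (e^{iθ},0) is complex-tangential); and L_ρ(p(θ))(ξ(θ)) = 0 (the Levi form of ρ vanishes on the complex tangent space at every point of M, so every point of M is a weakly pseudoconvex point of ∂Ω, of Bloom–Graham type greater than 2). -/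

import Mathlib

open Complex

/-- The (1,0)-differential `∂ρ(p)(ξ) = (1/2)(Dρ(p)(ξ) - i·Dρ(p)(iξ))`, where `Dρ(p)` is the
real Fréchet derivative of `ρ` at `p`. -/
noncomputable def delForm {E : Type*} [NormedAddCommGroup E] [NormedSpace ℂ E]
    (ρ : E → ℝ) (p ξ : E) : ℂ :=
  (1 / 2 : ℂ) * (((fderiv ℝ ρ p ξ : ℝ) : ℂ)
    - Complex.I * ((fderiv ℝ ρ p (Complex.I • ξ) : ℝ) : ℂ))

/-- The Levi form `L_ρ(p)(ξ) = (1/4)(D²ρ(p)(ξ,ξ) + D²ρ(p)(iξ,iξ))`, where `D²ρ(p)` is the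
second real Fréchet derivative of `ρ` at `p`. -/
noncomputable def leviForm {E : Type*} [NormedAddCommGroup E] [NormedSpace ℂ E]
    (ρ : E → ℝ) (p ξ : E) : ℝ :=
  (1 / 4 : ℝ) * (iteratedFDeriv ℝ 2 ρ p ![ξ, ξ]
    + iteratedFDeriv ℝ 2 ρ p ![Complex.I • ξ, Complex.I • ξ])

/-! ### Auxiliary lemmas -/

/-- `uu z = log |z|²`. -/
noncomputable def uu (z : ℂ) : ℝ := Real.log (Complex.normSq z)

lemma contDiff_normSq' {n : WithTop ℕ∞} : ContDiff ℝ n (fun z : ℂ => Complex.normSq z) := by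
  have h : (fun z : ℂ => Complex.normSq z) = fun z : ℂ => z.re * z.re + z.im * z.im := by
    funext z; simp [Complex.normSq_apply]
  rw [h]
  exact (Complex.reCLM.contDiff.mul Complex.reCLM.contDiff).add
    (Complex.imCLM.contDiff.mul Complex.imCLM.contDiff)

lemma contDiffAt_uu {z : ℂ} (hz : z ≠ 0) {n : WithTop ℕ∞} : ContDiffAt ℝ n uu z :=
  (Real.contDiffAt_log.2 (by simpa using hz)).comp z contDiff_normSq'.contDiffAt

lemma hasFDerivAt_g (C : ℝ) {z : ℂ} (hz : z ≠ 0) :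
    HasFDerivAt (fun z => C * uu z ^ 4) ((C * (4 * uu z ^ 3)) • fderiv ℝ uu z) z := by
  have hu : HasFDerivAt uu (fderiv ℝ uu z) z :=
    ((contDiffAt_uu hz (n := 2)).differentiableAt (by norm_num)).hasFDerivAt
  have h4 : HasDerivAt (fun t : ℝ => t ^ 4) (4 * uu z ^ 3) (uu z) := by
    simpa using hasDerivAt_pow 4 (uu z)
  have h := (h4.comp_hasFDerivAt z hu).const_mul C
  simpa [Function.comp, smul_smul] using h

lemma second_deriv_zero (C : ℝ) {z₀ : ℂ} (hz₀ : z₀ ≠ 0) (hu0 : uu z₀ = 0) :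
    fderiv ℝ (fderiv ℝ (fun z => C * uu z ^ 4)) z₀ = 0 := by
  have hev : fderiv ℝ (fun z => C * uu z ^ 4) =ᶠ[nhds z₀]
      fun z => (C * (4 * uu z ^ 3)) • fderiv ℝ uu z := by
    filter_upwards [isOpen_ne.mem_nhds hz₀] with z hz
    exact (hasFDerivAt_g C hz).fderiv
  rw [hev.fderiv_eq]
  have hu : HasFDerivAt uu (fderiv ℝ uu z₀) z₀ :=
    ((contDiffAt_uu hz₀ (n := 2)).differentiableAt (by norm_num)).hasFDerivAt
  have h3 : HasDerivAt (fun t : ℝ => t ^ 3) 0 (uu z₀) := by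
    simpa [hu0] using hasDerivAt_pow 3 (uu z₀)
  have ha : HasFDerivAt (fun z => C * (4 * uu z ^ 3)) (0 : ℂ →L[ℝ] ℝ) z₀ := by
    have h := ((h3.comp_hasFDerivAt z₀ hu).const_mul (4 : ℝ)).const_mul C
    simpa [Function.comp] using h
  have hT : HasFDerivAt (fderiv ℝ uu) (fderiv ℝ (fderiv ℝ uu) z₀) z₀ :=
    (((contDiffAt_uu hz₀ (n := 2)).fderiv_right (m := 1) (by norm_num)).differentiableAt
      (by norm_num)).hasFDerivAt
  have h0 : HasFDerivAt (fun z => (C * (4 * uu z ^ 3)) • fderiv ℝ uu z)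
      (0 : ℂ →L[ℝ] (ℂ →L[ℝ] ℝ)) z₀ := by
    have h := ha.smul hT
    refine h.congr_fderiv ?_
    rw [hu0]
    ext v w
    simp
  exact h0.fderiv

/-- With `ρ(z,w) = |w + e^{i log|z|²}|² + C (log|z|²)⁴ - 1`, at each point
`p(θ) = (e^{iθ}, 0)` of the circle `M` and with `ξ(θ) = (e^{iθ}, 0)`: `ρ(p(θ)) = 0`,
`∂ρ(p(θ))(ξ(θ)) = 0` (so `ξ(θ)` spans the complex tangent space, and `i·ξ(θ)`, the
tangent of `θ ↦ (e^{iθ},0)`, is complex-tangential), and `L_ρ(p(θ))(ξ(θ)) = 0` (the Levi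
form vanishes on the complex tangent space, so every point of `M` is a weakly
pseudoconvex point of `∂Ω`). -/
theorem stmt_14 (C : ℝ) (hC : 0 < C)
    (ρ : ℂ × ℂ → ℝ)
    (hρ : ∀ p : ℂ × ℂ,
      ρ p = (‖(p.2
          + Complex.exp (Complex.I * (Real.log ((‖p.1‖) ^ 2) : ℂ)))‖) ^ 2
        + C * (Real.log ((‖p.1‖) ^ 2)) ^ 4 - 1) :
    ∀ θ : ℝ,
      ρ (Complex.exp (Complex.I * θ), 0) = 0 ∧
      delForm ρ (Complex.exp (Complex.I * θ), 0) (Complex.exp (Complex.I * θ), 0) = 0 ∧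
      leviForm ρ (Complex.exp (Complex.I * θ), 0) (Complex.exp (Complex.I * θ), 0) = 0 := by
  intro θ
  have hz₀ : (Complex.exp (Complex.I * θ)) ≠ 0 := Complex.exp_ne_zero _
  set z₀ : ℂ := Complex.exp (Complex.I * θ) with hz₀def
  have habs : ‖z₀‖ = 1 := by
    rw [hz₀def, Complex.norm_exp]; simp
  have hns : Complex.normSq z₀ = 1 := by
    rw [← Complex.sq_norm, habs]; norm_num
  have hu0 : uu z₀ = 0 := by simp [uu, hns]
  -- the set `s`, the embedding `j` and the restricted function `g`
  set s : Set (ℂ × ℂ) := {q : ℂ × ℂ | q.1 ≠ 0} with hsdef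
  set j : ℂ →L[ℝ] ℂ × ℂ := ContinuousLinearMap.inl ℝ ℂ ℂ with hjdef
  have hjz : ∀ z : ℂ, j z = (z, 0) := fun z => rfl
  have hgj : ρ ∘ j = fun z => C * uu z ^ 4 := by
    funext z
    have hsq : (‖z‖) ^ 2 = Complex.normSq z := Complex.sq_norm z
    simp only [Function.comp_apply, hjz, hρ]
    rw [hsq]
    simp [Complex.norm_exp, uu]
  have hs : IsOpen s := isOpen_ne.preimage continuous_fst
  have hpmem : (z₀, (0 : ℂ)) ∈ s := hz₀
  -- smoothness of ρ on s
  have hρC : ContDiffOn ℝ 2 ρ s := by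
    have hmain : ContDiffOn ℝ 2
        (fun q : ℂ × ℂ => Complex.normSq (q.2 + Complex.exp (Complex.I * (uu q.1 : ℂ)))
          + C * uu q.1 ^ 4 - 1) s := by
      intro q hq
      have hq1 : q.1 ≠ 0 := hq
      have c1 : ContDiffAt ℝ 2 (fun q : ℂ × ℂ => uu q.1) q :=
        (contDiffAt_uu hq1).comp q contDiffAt_fst
      have c2 : ContDiffAt ℝ 2 (fun q : ℂ × ℂ => Complex.exp (Complex.I * (uu q.1 : ℂ))) q := by
        have hexp : ContDiff ℝ 2 Complex.exp :=
          (Complex.contDiff_exp (𝕜 := ℂ)).restrict_scalars ℝ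
        exact hexp.contDiffAt.comp q
          (contDiffAt_const.mul ((Complex.ofRealCLM.contDiff.contDiffAt).comp q c1))
      have c3 : ContDiffAt ℝ 2
          (fun q : ℂ × ℂ => Complex.normSq (q.2 + Complex.exp (Complex.I * (uu q.1 : ℂ)))) q :=
        contDiff_normSq'.contDiffAt.comp q (contDiffAt_snd.add c2)
      exact ((c3.add (contDiffAt_const.mul (c1.pow 4))).sub contDiffAt_const).contDiffWithinAt
    refine hmain.congr ?_
    intro q hq
    rw [hρ]
    have h1 : (‖q.1‖) ^ 2 = Complex.normSq q.1 := Complex.sq_norm _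
    have h2 : (‖(q.2
        + Complex.exp (Complex.I * (Real.log ((‖q.1‖) ^ 2) : ℂ)))‖) ^ 2
        = Complex.normSq (q.2
          + Complex.exp (Complex.I * (Real.log ((‖q.1‖) ^ 2) : ℂ))) :=
      Complex.sq_norm _
    rw [h2, h1]
    rfl
  have hρdiff : DifferentiableAt ℝ ρ (z₀, 0) :=
    (hρC.contDiffAt (hs.mem_nhds hpmem)).differentiableAt (by norm_num)
  -- first derivative of ρ vanishes on directions (v, 0)
  have hfg : fderiv ℝ (fun z => C * uu z ^ 4) z₀ = 0 := by
    rw [(hasFDerivAt_g C hz₀).fderiv, hu0]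
    simp
  have hfdρ : ∀ v : ℂ, fderiv ℝ ρ (z₀, 0) (v, 0) = 0 := by
    intro v
    have hcomp : fderiv ℝ (ρ ∘ j) z₀ = (fderiv ℝ ρ (z₀, 0)).comp j := by
      rw [fderiv_comp z₀ hρdiff j.differentiableAt, j.fderiv, hjz]
    have h : (fderiv ℝ ρ (z₀, 0)).comp j v = 0 := by
      rw [← hcomp, hgj, hfg]; rfl
    simpa [hjz] using h
  -- second derivative of ρ vanishes on pairs of directions (v, 0)
  have h2g : fderiv ℝ (fderiv ℝ (fun z => C * uu z ^ 4)) z₀ = 0 :=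
    second_deriv_zero C hz₀ hu0
  have h2ρ : ∀ v : ℂ, iteratedFDeriv ℝ 2 ρ (z₀, 0) ![(v, 0), (v, 0)] = 0 := by
    intro v
    have hopen' : IsOpen (j ⁻¹' s) := hs.preimage j.continuous
    have hcomp := j.iteratedFDerivWithin_comp_right hρC hs.uniqueDiffOn hopen'.uniqueDiffOn
      (x := z₀) hpmem (i := 2) (by norm_num)
    have hz₀mem' : z₀ ∈ j ⁻¹' s := hz₀
    rw [hjz] at hcomp
    rw [iteratedFDerivWithin_of_isOpen 2 hopen' hz₀mem',
      iteratedFDerivWithin_of_isOpen 2 hs hpmem, hgj] at hcomp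
    have happ := congrArg (fun T => T ![v, v]) hcomp
    simp only [ContinuousMultilinearMap.compContinuousLinearMap_apply] at happ
    have hvec : (fun i : Fin 2 => j (![v, v] i)) = ![(v, 0), (v, 0)] := by
      funext i; fin_cases i <;> rfl
    rw [hvec] at happ
    rw [← happ, iteratedFDeriv_two_apply, h2g]
    simp
  -- conclusion
  have hsmul : Complex.I • ((z₀ : ℂ), (0 : ℂ)) = ((Complex.I * z₀ : ℂ), (0 : ℂ)) := by
    simp [Prod.smul_def, smul_eq_mul]
  refine ⟨?_, ?_, ?_⟩
  · rw [hρ]; simp [habs]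
  · rw [delForm, hsmul, hfdρ z₀, hfdρ (Complex.I * z₀)]
    simp
  · rw [leviForm, hsmul, h2ρ z₀, h2ρ (Complex.I * z₀)]
    simp
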